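/- Let f ∈ AC¹ and let (n_j) be a strictly increasing sequence of even positive integers. Then lim_{j→∞} n_j · sup { |B_{n_j}(f,x) − f(x) − E(f,x)/D_{n_j}(x)| : x ∈ (−1,1), x not a node x_{k,n_j} } = 0. -/

import Mathlib

open Filter Set MeasureTheory

noncomputable section

/-- Equally spaced nodes `x_{k,n} = 2k/n - 1`. -/
def node (n k : ℕ) : ℝ := 2 * k / n - 1

/-- `x` is one of the nodes `x_{0,n}, …, x_{n,n}`. -/
def isNode (n : ℕ) (x : ℝ) : Prop := ∃ k ≤ n, x = node n k

/-- Denominator of Berrut's interpolant. -/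
def Dden (n : ℕ) (x : ℝ) : ℝ :=
  ∑ k ∈ Finset.range (n + 1), (-1 : ℝ) ^ k / (x - node n k)

/-- Numerator of Berrut's interpolant. -/
def Nnum (f : ℝ → ℝ) (n : ℕ) (x : ℝ) : ℝ :=
  ∑ k ∈ Finset.range (n + 1), (-1 : ℝ) ^ k * f (node n k) / (x - node n k)

open Classical in
/-- Berrut's barycentric interpolant. -/
def berrut (f : ℝ → ℝ) (n : ℕ) (x : ℝ) : ℝ :=
  if isNode n x then f x else Nnum f n x / Dden n x

/-- The odd bias function `O(f,x)`. -/
def Ofun (f : ℝ → ℝ) (x : ℝ) : ℝ :=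
  (f x - f 1) / (2 * (x - 1)) - (f x - f (-1)) / (2 * (x + 1))

/-- The even bias function `E(f,x)`. -/
def Efun (f : ℝ → ℝ) (x : ℝ) : ℝ :=
  (f 1 - f x) / (2 * (x - 1)) + (f (-1) - f x) / (2 * (x + 1))

/-- `f` is differentiable on `[-1,1]` with absolutely continuous derivative. -/
def AC1 (f : ℝ → ℝ) : Prop :=
  ∃ f' : ℝ → ℝ,
    (∀ x ∈ Set.Icc (-1 : ℝ) 1, HasDerivWithinAt f (f' x) (Set.Icc (-1 : ℝ) 1) x) ∧
    ∃ g : ℝ → ℝ, IntervalIntegrable g volume (-1) 1 ∧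
      ∀ x ∈ Set.Icc (-1 : ℝ) 1, f' x = f' (-1) + ∫ t in (-1 : ℝ)..x, g t

/-- `x` is regular for the sequence `n j`: eventually never a node. -/
def Regular (n : ℕ → ℕ) (x : ℝ) : Prop := ∃ j₀, ∀ j ≥ j₀, ¬ isNode (n j) x

/-- The function `A(x) = Σ (-1)^k (4k+2)/((2k+1)^2 - x)`. -/
def Afun (x : ℝ) : ℝ := ∑' k : ℕ, (-1 : ℝ) ^ k * (4 * k + 2) / ((2 * k + 1) ^ 2 - x)

/-- `ι_n(x) = ⌊n(x+1)/2⌋`. -/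
def iota (n : ℕ) (x : ℝ) : ℤ := ⌊(n : ℝ) * (x + 1) / 2⌋

/-- `ρ_n(x) = n(x - x_{ι_n(x),n}) - 1 = n(x+1) - 2 ι_n(x) - 1`. -/
def rho (n : ℕ) (x : ℝ) : ℝ := (n : ℝ) * (x + 1) - 2 * (iota n x : ℝ) - 1

open Classical in
/-- The de-biased numerator `Δ_n(f,x)`. -/
def Delta (f : ℝ → ℝ) (n : ℕ) (x : ℝ) : ℝ :=
  if isNode n x then 0 else
    (f (-1) - f x) / (2 * (x + 1)) + (-1 : ℝ) ^ n * (f 1 - f x) / (2 * (x - 1)) +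
      (1 / (n : ℝ)) * ∑ k ∈ Finset.Ioo 0 n, (-1 : ℝ) ^ k * (f (node n k) - f x) / (x - node n k)

end

/-!
Put `s_k := slope f x x_k`. Then `N_n(f,x) - f(x) D_n(x) = -∑ (-1)^k s_k` and
`E(f,x) = -(s_0 + s_n)/2`, so for `n = 2M` summation by parts gives
`N_n - f D_n - E = -½ ∑_{m<M} (s_{2m} - 2 s_{2m+1} + s_{2m+2})`.
Since `s_k = ∫₀¹ f'(x + θ(x_k - x)) dθ` and, for fixed `θ`, the points `x + θ(x_k - x)` are
equally spaced with step `σ = 2θ/n`, this is an average over `θ` of sums of second differences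
of `f'`. Each of them equals `∫_q^{q+σ} (f''(u+σ) - f''(u)) du` on pairwise disjoint intervals,
so the sum is bounded by `∫ |f''(u+σ) - f''(u)| du`, which tends to `0` by continuity of
translation in `L¹`. Hence `N_n - f D_n - E → 0` uniformly in `x`, and the theorem follows from
`B_n - f - E/D_n = (N_n - f D_n - E)/D_n` together with the lower bound `|D_n(x)| ≥ n`.
-/
open Finset Topology

lemma sum_range_succ_alternating (c : ℕ → ℝ) (N : ℕ) :
    ∑ k ∈ range (N + 1), (-1 : ℝ) ^ k * c k =
      c 0 - ∑ k ∈ range N, (-1 : ℝ) ^ k * c (k + 1) := by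
  rw [sum_range_succ', sub_eq_add_neg, ← sum_neg_distrib, add_comm]
  simp [pow_succ]

lemma sum_alternating_mem_Icc {c : ℕ → ℝ} (hc : Antitone c) (hc0 : 0 ≤ c) (N : ℕ) :
    ∑ k ∈ range N, (-1 : ℝ) ^ k * c k ∈ Icc 0 (c 0) := by
  induction N generalizing c with
  | zero => simpa using hc0 0
  | succ N ih =>
    have h := ih (hc.comp_monotone fun _ _ h => Nat.succ_le_succ h) fun k => hc0 (k + 1)
    have h01 : c 1 ≤ c 0 := hc zero_le_one
    simp only [Function.comp_apply, Set.mem_Icc] at h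
    rw [sum_range_succ_alternating]
    constructor <;> linarith

lemma sub_le_sum_alternating {c : ℕ → ℝ} (hc : Antitone c) (hc0 : 0 ≤ c) (N : ℕ) :
    c 0 - c 1 ≤ ∑ k ∈ range (N + 1), (-1 : ℝ) ^ k * c k := by
  have h := sum_alternating_mem_Icc (hc.comp_monotone fun _ _ h => Nat.succ_le_succ h)
    (fun k => hc0 (k + 1)) N
  simp only [Function.comp_apply, Set.mem_Icc] at h
  rw [sum_range_succ_alternating]
  linarith

lemma one_div_sub_one_div_le_sum_alternating {u h : ℝ} (hu : 0 < u) (hh : 0 < h) (N : ℕ) :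
    1 / u - 1 / h ≤ ∑ k ∈ range (N + 1), (-1 : ℝ) ^ k / (u + k * h) := by
  have hpos : ∀ k : ℕ, 0 < u + k * h := fun k => by positivity
  have hanti : Antitone fun k : ℕ => 1 / (u + k * h) := fun k l hkl =>
    one_div_le_one_div_of_le (hpos k) (by gcongr)
  have hsum := sub_le_sum_alternating hanti (fun k => (one_div_pos.2 (hpos k)).le) N
  simp only [mul_one_div, CharP.cast_eq_zero, zero_mul, add_zero, Nat.cast_one, one_mul] at hsum
  have : 1 / (u + h) ≤ 1 / h := one_div_le_one_div_of_le hh (by linarith)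
  linarith

lemma node_eq (n k : ℕ) : node n k = -1 + k * (2 / n) := by
  unfold node; ring

lemma node_zero (n : ℕ) : node n 0 = -1 := by
  simp [node]

lemma node_self {n : ℕ} (hn : n ≠ 0) : node n n = 1 := by
  rw [node, mul_div_assoc, div_self (Nat.cast_ne_zero.2 hn)]; norm_num

lemma node_mem_Icc {n k : ℕ} (hk : k ≤ n) : node n k ∈ Icc (-1 : ℝ) 1 := by
  rcases Nat.eq_zero_or_pos n with rfl | hn
  · simp [node]
  have hkn : (k : ℝ) * (2 / n) ≤ 2 := by
    rw [mul_div_assoc', div_le_iff₀ (Nat.cast_pos.2 hn)]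
    nlinarith [(Nat.cast_le (α := ℝ)).2 hk]
  rw [node_eq]
  constructor <;> nlinarith [show (0 : ℝ) ≤ k * (2 / n) by positivity]

/-- Splitting the sum at the node `x_i` just left of `x` turns `D_n(x)` into two alternating
sums with decreasing terms. -/
lemma neg_one_pow_mul_Dden {n i : ℕ} (hi : i < n) (x : ℝ) :
    (-1 : ℝ) ^ i * Dden n x =
      ∑ j ∈ range (i + 1), (-1 : ℝ) ^ j / ((x - node n i) + j * (2 / n)) +
      ∑ l ∈ range (n - i), (-1 : ℝ) ^ l / ((node n (i + 1) - x) + l * (2 / n)) := by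
  rw [Dden, show n + 1 = (i + 1) + (n - i) by omega, sum_range_add, mul_add, mul_sum, mul_sum,
    ← sum_range_reflect _ (i + 1)]
  congr 1 <;> refine sum_congr rfl fun j hj => ?_
  · have hj : j ≤ i := Nat.lt_succ_iff.1 (mem_range.1 hj)
    have hsign : (-1 : ℝ) ^ i * (-1) ^ (i - j) = (-1) ^ j := by
      rw [← pow_add, show i + (i - j) = j + 2 * (i - j) by omega, pow_add, pow_mul, neg_one_sq,
        one_pow, mul_one]
    rw [Nat.add_sub_cancel, ← mul_div_assoc, hsign, node_eq, node_eq, Nat.cast_sub hj]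
    ring_nf
  · have hsign : (-1 : ℝ) ^ i * (-1) ^ (i + 1 + j) = -(-1) ^ j := by
      rw [← pow_add, show i + (i + 1 + j) = j + 1 + 2 * i by omega, pow_add, pow_add, pow_mul,
        neg_one_sq, one_pow]; ring
    rw [← mul_div_assoc, hsign]
    simp only [node_eq]
    push_cast
    rw [show x - (-1 + (↑i + 1 + ↑j) * (2 / ↑n)) =
        -(-1 + (↑i + 1) * (2 / ↑n) - x + ↑j * (2 / ↑n)) by ring, div_neg, neg_div, neg_neg]

theorem le_abs_Dden {n : ℕ} (hn : 0 < n) {x : ℝ} (hx : x ∈ Ioo (-1 : ℝ) 1)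
    (hnx : ¬ isNode n x) : (n : ℝ) ≤ |Dden n x| := by
  have hnr : (0 : ℝ) < n := Nat.cast_pos.2 hn
  have ht : 0 ≤ n * (x + 1) / 2 := by
    have : 0 < x + 1 := by linarith [hx.1]
    positivity
  set i := ⌊n * (x + 1) / 2⌋₊
  have hi : i < n := by
    rw [Nat.floor_lt ht, div_lt_iff₀ two_pos]; nlinarith [hx.2]
  have hu : 0 < x - node n i := by
    have hle : node n i ≤ x := by
      have := Nat.floor_le ht
      rw [node, div_sub_one hnr.ne', div_le_iff₀ hnr]; linarith
    exact sub_pos.2 (hle.lt_of_ne fun h => hnx ⟨i, hi.le, h.symm⟩)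
  have hv : 0 < node n (i + 1) - x := by
    have := Nat.lt_floor_add_one (n * (x + 1) / 2)
    rw [sub_pos, node, div_sub_one hnr.ne', lt_div_iff₀ hnr]; push_cast; linarith
  have huv : (x - node n i) + (node n (i + 1) - x) = 2 / n := by
    rw [node_eq, node_eq]; push_cast; ring
  have hh : 1 / (2 / (n : ℝ)) = n / 2 := one_div_div (2 : ℝ) n
  have ham : 4 / (2 / (n : ℝ)) ≤ 1 / (x - node n i) + 1 / (node n (i + 1) - x) := by
    rw [← huv, div_add_div _ _ hu.ne' hv.ne', div_le_div_iff₀ (by positivity) (by positivity)]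
    nlinarith [sq_nonneg ((x - node n i) - (node n (i + 1) - x))]
  rw [div_div_eq_mul_div] at ham
  have hA := one_div_sub_one_div_le_sum_alternating hu (by positivity : (0 : ℝ) < 2 / n) i
  have hB := one_div_sub_one_div_le_sum_alternating hv (by positivity : (0 : ℝ) < 2 / n)
    (n - i - 1)
  rw [show n - i - 1 + 1 = n - i by omega] at hB
  calc (n : ℝ) ≤ (-1) ^ i * Dden n x := by
        rw [neg_one_pow_mul_Dden hi]; rw [hh] at hA hB; linarith
    _ ≤ |(-1) ^ i * Dden n x| := le_abs_self _
    _ = |Dden n x| := by simp [abs_mul]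

def evenSecondDiffSum (c : ℕ → ℝ) (M : ℕ) : ℝ :=
  ∑ m ∈ range M, (c (2 * m) - 2 * c (2 * m + 1) + c (2 * m + 2))

lemma evenSecondDiffSum_congr {c d : ℕ → ℝ} {M : ℕ} (h : ∀ k ≤ 2 * M, c k = d k) :
    evenSecondDiffSum c M = evenSecondDiffSum d M :=
  sum_congr rfl fun m hm => by
    have := mem_range.1 hm
    rw [h (2 * m) (by omega), h (2 * m + 1) (by omega), h (2 * m + 2) (by omega)]

lemma evenSecondDiffSum_const_add (a : ℝ) (c : ℕ → ℝ) (M : ℕ) :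
    evenSecondDiffSum (fun k => a + c k) M = evenSecondDiffSum c M :=
  sum_congr rfl fun _ _ => by ring

lemma evenSecondDiffSum_integral {F : ℕ → ℝ → ℝ} {a b : ℝ}
    (hF : ∀ k, IntervalIntegrable (F k) volume a b) (M : ℕ) :
    evenSecondDiffSum (fun k => ∫ θ in a..b, F k θ) M =
      ∫ θ in a..b, evenSecondDiffSum (fun k => F k θ) M := by
  have hterm : ∀ m, IntervalIntegrable
      (fun θ => F (2 * m) θ - 2 * F (2 * m + 1) θ + F (2 * m + 2) θ) volume a b :=
    fun m => ((hF _).sub ((hF _).const_mul 2)).add (hF _)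
  simp only [evenSecondDiffSum]
  rw [intervalIntegral.integral_finsetSum fun m _ => hterm m]
  refine sum_congr rfl fun m _ => ?_
  rw [intervalIntegral.integral_add ((hF _).sub ((hF _).const_mul 2)) (hF _),
    intervalIntegral.integral_sub (hF _) ((hF _).const_mul 2),
    intervalIntegral.integral_const_mul]

lemma two_mul_sum_alternating (c : ℕ → ℝ) (M : ℕ) :
    2 * ∑ k ∈ range (2 * M + 1), (-1 : ℝ) ^ k * c k =
      c 0 + c (2 * M) + evenSecondDiffSum c M := by
  induction M with
  | zero => simp [evenSecondDiffSum]; ring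
  | succ M ih =>
    have hsum : ∑ k ∈ range (2 * (M + 1) + 1), (-1 : ℝ) ^ k * c k =
        ∑ k ∈ range (2 * M + 1), (-1 : ℝ) ^ k * c k - c (2 * M + 1) + c (2 * M + 2) := by
      rw [show 2 * (M + 1) + 1 = 2 * M + 1 + 1 + 1 by ring, sum_range_succ, sum_range_succ]
      simp only [pow_succ, (even_two_mul M).neg_one_pow]
      ring
    have hdiff : evenSecondDiffSum c (M + 1) =
        evenSecondDiffSum c M + (c (2 * M) - 2 * c (2 * M + 1) + c (2 * M + 2)) :=
      sum_range_succ _ M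
    rw [hsum, hdiff, show 2 * (M + 1) = 2 * M + 2 by ring]
    linear_combination ih

lemma Nnum_sub_mul_Dden (f : ℝ → ℝ) (n : ℕ) (x : ℝ) :
    Nnum f n x - f x * Dden n x =
      -∑ k ∈ range (n + 1), (-1 : ℝ) ^ k * slope f x (node n k) := by
  rw [Nnum, Dden, mul_sum, ← sum_sub_distrib, ← sum_neg_distrib]
  refine sum_congr rfl fun k _ => ?_
  rw [slope_def_field, ← neg_sub x, div_neg]
  ring

lemma Efun_eq_slope (f : ℝ → ℝ) (x : ℝ) :
    Efun f x = -(slope f x (-1) + slope f x 1) / 2 := by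
  rw [Efun, slope_def_field, slope_def_field, ← neg_sub x 1, ← neg_sub x (-1), div_neg, div_neg,
    sub_neg_eq_add, ← div_div, ← div_div]
  ring

lemma Nnum_sub_mul_Dden_sub_Efun (f : ℝ → ℝ) {M : ℕ} (hM : M ≠ 0) (x : ℝ) :
    Nnum f (2 * M) x - f x * Dden (2 * M) x - Efun f x =
      -evenSecondDiffSum (fun k => slope f x (node (2 * M) k)) M / 2 := by
  have h := two_mul_sum_alternating (fun k => slope f x (node (2 * M) k)) M
  rw [node_zero, node_self (by omega)] at h
  rw [Nnum_sub_mul_Dden, Efun_eq_slope]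
  linear_combination -h / 2

lemma MeasureTheory.Integrable.tendsto_integral_abs_comp_add_sub {G : ℝ → ℝ}
    (hG : Integrable G) : Tendsto (fun s => ∫ u, |G (s + u) - G u|) (𝓝 0) (𝓝 0) := by
  have : Fact ((1 : ENNReal) ≠ ⊤) := ⟨ENNReal.one_ne_top⟩
  have hcont : Continuous fun s : ℝ => DomAddAct.mk s +ᵥ hG.toL1 G :=
    DomAddAct.continuous_mk.vadd continuous_const
  have hlim := hcont.tendsto 0
  rw [DomAddAct.mk_zero, zero_vadd, tendsto_iff_dist_tendsto_zero] at hlim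
  refine hlim.congr fun s => ?_
  rw [dist_eq_norm, L1.norm_eq_integral_norm]
  refine integral_congr_ae ?_
  filter_upwards [Lp.coeFn_sub (DomAddAct.mk s +ᵥ hG.toL1 G) (hG.toL1 G),
    DomAddAct.vadd_Lp_ae_eq (DomAddAct.mk s) (hG.toL1 G),
    (measurePreserving_add_left volume s).quasiMeasurePreserving.ae_eq_comp hG.coeFn_toL1,
    hG.coeFn_toL1] with u h_sub h_vadd h_shift h
  simp only [Pi.sub_apply, Function.comp_apply, Equiv.symm_apply_apply, vadd_eq_add] at *
  rw [h_sub, h_vadd, h_shift, h, Real.norm_eq_abs]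

lemma primitive_secondDiff_eq {G : ℝ → ℝ} (hG : Integrable G) (a q s : ℝ) :
    ((∫ t in a..q, G t) - 2 * (∫ t in a..q + s, G t)) + (∫ t in a..q + 2 * s, G t) =
      ∫ u in q..q + s, (G (s + u) - G u) := by
  have hi : ∀ b c : ℝ, IntervalIntegrable G volume b c := fun _ _ => hG.intervalIntegrable
  have hshift : ∫ u in q..q + s, G (s + u) = ∫ t in q + s..q + 2 * s, G t := by
    rw [intervalIntegral.integral_comp_add_left, add_comm s q,
      show s + (q + s) = q + 2 * s by ring]
  rw [intervalIntegral.integral_sub (hG.comp_add_left s).intervalIntegrable (hi _ _), hshift,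
    ← intervalIntegral.integral_interval_sub_left (hi a _) (hi a (q + s)),
    ← intervalIntegral.integral_interval_sub_left (hi a _) (hi a q)]
  ring

lemma abs_evenSecondDiffSum_primitive_le {G : ℝ → ℝ} (hG : Integrable G) (a p : ℝ) {s : ℝ}
    (hs : 0 ≤ s) (M : ℕ) :
    |evenSecondDiffSum (fun k => ∫ t in a..p + k * s, G t) M| ≤ ∫ u, |G (s + u) - G u| := by
  set Φ : ℝ → ℝ := fun y => ∫ t in a..y, G t
  set ψ : ℝ → ℝ := fun u => |G (s + u) - G u|
  have hψ : Integrable ψ := ((hG.comp_add_left s).sub hG).abs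
  have hterm : ∀ m : ℕ, |Φ (p + ↑(2 * m) * s) - 2 * Φ (p + ↑(2 * m + 1) * s)
      + Φ (p + ↑(2 * m + 2) * s)| ≤ ∫ u in p + 2 * m * s..p + 2 * ↑(m + 1) * s, ψ u := by
    intro m
    push_cast
    rw [show p + (2 * m + 1) * s = p + 2 * m * s + s by ring,
      show p + (2 * m + 2) * s = p + 2 * m * s + 2 * s by ring,
      primitive_secondDiff_eq hG a (p + 2 * m * s) s]
    calc _ ≤ ∫ u in p + 2 * m * s..p + 2 * m * s + s, ψ u :=
          intervalIntegral.abs_integral_le_integral_abs (by linarith)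
      _ ≤ _ := intervalIntegral.integral_mono_interval le_rfl (by linarith) (by nlinarith)
          (Eventually.of_forall fun _ => abs_nonneg _) hψ.intervalIntegrable
  calc |evenSecondDiffSum (fun k => Φ (p + k * s)) M|
      ≤ ∑ m ∈ range M, ∫ u in p + 2 * m * s..p + 2 * ↑(m + 1) * s, ψ u :=
        (abs_sum_le_sum_abs _ _).trans (sum_le_sum fun m _ => hterm m)
    _ = ∫ u in p + 2 * ((0 : ℕ) : ℝ) * s..p + 2 * (M : ℝ) * s, ψ u :=
        intervalIntegral.sum_integral_adjacent_intervals (a := fun m : ℕ => p + 2 * m * s)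
          fun _ _ => hψ.intervalIntegrable
    _ ≤ ∫ u, ψ u := by
        rw [intervalIntegral.integral_of_le (by push_cast; nlinarith)]
        exact setIntegral_le_integral hψ (Eventually.of_forall fun _ => abs_nonneg _)

lemma slope_eq_integral_comp {f f' : ℝ → ℝ} {a b : ℝ}
    (hf : ∀ x ∈ Icc a b, HasDerivWithinAt f (f' x) (Icc a b) x)
    (hf' : ContinuousOn f' (Icc a b)) {x y : ℝ} (hx : x ∈ Icc a b) (hy : y ∈ Icc a b)
    (hxy : x ≠ y) :
    slope f x y = ∫ θ in (0 : ℝ)..1, f' (x + (y - x) * θ) := by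
  have hseg : uIcc x y ⊆ Icc a b := uIcc_subset_Icc hx hy
  have hcont : ContinuousOn f (Icc a b) := fun t ht => (hf t ht).continuousWithinAt
  have hftc : ∫ t in x..y, f' t = f y - f x := by
    refine intervalIntegral.integral_eq_sub_of_hasDeriv_right (hcont.mono hseg)
      (fun t ht => ?_) (hf'.mono hseg).intervalIntegrable
    have ha : a < t := (le_min hx.1 hy.1).trans_lt ht.1
    have hb : t < b := ht.2.trans_le (max_le hx.2 hy.2)
    exact ((hf t ⟨ha.le, hb.le⟩).hasDerivAt (Icc_mem_nhds ha hb)).hasDerivWithinAt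
  rw [intervalIntegral.integral_comp_add_mul f' (sub_ne_zero.2 hxy.symm), mul_zero, mul_one,
    add_zero, add_sub_cancel, hftc, slope_def_field, smul_eq_mul, div_eq_inv_mul]

lemma AC1.exists_hasDerivWithinAt_primitive {f : ℝ → ℝ} (hf : AC1 f) :
    ∃ (c : ℝ) (G : ℝ → ℝ), Integrable G ∧ ∀ x ∈ Icc (-1 : ℝ) 1,
      HasDerivWithinAt f (c + ∫ t in (-1 : ℝ)..x, G t) (Icc (-1 : ℝ) 1) x := by
  obtain ⟨f', hf', g, hg, hfg⟩ := hf
  refine ⟨f' (-1), (Icc (-1 : ℝ) 1).indicator g, ?_, fun x hx => ?_⟩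
  · rw [integrable_indicator_iff measurableSet_Icc, ← uIcc_of_le (by norm_num : (-1 : ℝ) ≤ 1)]
    exact (intervalIntegrable_iff').1 hg
  · convert hf' x hx using 1
    rw [hfg x hx]
    congr 1
    refine intervalIntegral.integral_congr fun t ht => indicator_of_mem ?_ g
    exact uIcc_subset_Icc (Set.left_mem_Icc.2 (by norm_num)) hx ht

theorem AC1.eventually_abs_Nnum_sub_mul_Dden_sub_Efun_le {f : ℝ → ℝ} (hf : AC1 f) {ε : ℝ}
    (hε : 0 < ε) : ∀ᶠ n : ℕ in atTop, Even n → ∀ x ∈ Ioo (-1 : ℝ) 1, ¬ isNode n x →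
      |Nnum f n x - f x * Dden n x - Efun f x| ≤ ε := by
  obtain ⟨c, G, hG, hderiv⟩ := hf.exists_hasDerivWithinAt_primitive
  set Φ : ℝ → ℝ := fun y => ∫ t in (-1 : ℝ)..y, G t
  have hΦ : Continuous Φ :=
    intervalIntegral.continuous_primitive (fun _ _ => hG.intervalIntegrable) _
  obtain ⟨δ, hδ, hsmall⟩ := Metric.eventually_nhds_iff.1
    (hG.tendsto_integral_abs_comp_add_sub.eventually (gt_mem_nhds hε))
  filter_upwards [(tendsto_const_div_atTop_nhds_zero_nat (2 : ℝ)).eventually (gt_mem_nhds hδ),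
    eventually_ne_atTop 0] with n hnδ hn0 hev x hx hnx
  obtain ⟨M, rfl⟩ := even_iff_two_dvd.1 hev
  set s : ℝ → ℝ := fun θ => θ * (2 / (2 * M : ℕ))
  have hslope : ∀ k ≤ 2 * M, slope f x (node (2 * M) k) =
      ∫ θ in (0 : ℝ)..1, (c + Φ (x - θ * (x + 1) + k * s θ)) := by
    intro k hk
    rw [slope_eq_integral_comp (f' := fun y => c + Φ y) hderiv
      (continuousOn_const.add hΦ.continuousOn) (Ioo_subset_Icc_self hx) (node_mem_Icc hk)
      fun h => hnx ⟨k, hk, h⟩]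
    refine intervalIntegral.integral_congr fun θ _ => ?_
    simp only [node_eq, s]
    ring_nf
  have hbound : ∀ θ ∈ uIoc (0 : ℝ) 1,
      ‖evenSecondDiffSum (fun k => Φ (x - θ * (x + 1) + k * s θ)) M‖ ≤ ε := by
    intro θ hθ
    rw [uIoc_of_le zero_le_one] at hθ
    have hs0 : 0 ≤ s θ := by have := hθ.1; positivity
    have hsδ : s θ < δ := lt_of_le_of_lt (mul_le_of_le_one_left (by positivity) hθ.2) hnδ
    refine (abs_evenSecondDiffSum_primitive_le hG (-1) _ hs0 M).trans (hsmall ?_).le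
    rwa [Real.dist_eq, sub_zero, abs_of_nonneg hs0]
  rw [Nnum_sub_mul_Dden_sub_Efun f (by omega), evenSecondDiffSum_congr hslope,
    evenSecondDiffSum_integral fun k => (by fun_prop : Continuous _).intervalIntegrable _ _,
    abs_div, abs_neg, abs_two,
    intervalIntegral.integral_congr fun θ _ => evenSecondDiffSum_const_add c _ M]
  have := intervalIntegral.norm_integral_le_of_norm_le_const hbound
  rw [Real.norm_eq_abs, sub_zero, abs_one, mul_one] at this
  linarith

lemma mul_iSup_abs_berrut_sub_le {f : ℝ → ℝ} {n : ℕ} (hn : 0 < n) {ε : ℝ} (hε : 0 ≤ ε)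
    (h : ∀ x ∈ Ioo (-1 : ℝ) 1, ¬ isNode n x → |Nnum f n x - f x * Dden n x - Efun f x| ≤ ε) :
    (n : ℝ) * ⨆ x : {x : ℝ // x ∈ Ioo (-1 : ℝ) 1 ∧ ¬ isNode n x},
      |berrut f n x - f x - Efun f x / Dden n x| ≤ ε := by
  have hnr : (0 : ℝ) < n := Nat.cast_pos.2 hn
  rw [← le_div_iff₀' hnr]
  refine Real.iSup_le (fun ⟨x, hx, hnx⟩ => ?_) (by positivity)
  have hD := le_abs_Dden hn hx hnx
  have hD0 : Dden n x ≠ 0 := abs_pos.1 (hnr.trans_le hD)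
  calc |berrut f n x - f x - Efun f x / Dden n x|
      = |Nnum f n x - f x * Dden n x - Efun f x| / |Dden n x| := by
        rw [berrut, if_neg hnx, ← abs_div]
        field_simp
    _ ≤ ε / n := div_le_div₀ hε (h x hx hnx) hnr hD

/-- for `f ∈ AC¹` and an even sequence `(n_j)`,
`n_j · sup_{x ∈ (-1,1) not a node} |B_{n_j}(f,x) - f(x) - E(f,x)/D_{n_j}(x)| → 0`. -/
theorem statement9 (f : ℝ → ℝ) (hf : AC1 f) (n : ℕ → ℕ) (hmono : StrictMono n)
    (heven : ∀ j, Even (n j) ∧ 0 < n j) :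
    Filter.Tendsto
      (fun j : ℕ => (n j : ℝ) *
        ⨆ x : {x : ℝ // x ∈ Set.Ioo (-1 : ℝ) 1 ∧ ¬ isNode (n j) x},
          |berrut f (n j) (x : ℝ) - f (x : ℝ) - Efun f (x : ℝ) / Dden (n j) (x : ℝ)|)
      Filter.atTop (nhds 0) := by
  rw [Metric.tendsto_atTop]
  intro ε hε
  obtain ⟨N, hN⟩ := eventually_atTop.1 <| hmono.tendsto_atTop.eventually
    (hf.eventually_abs_Nnum_sub_mul_Dden_sub_Efun_le (half_pos hε))
  refine ⟨N, fun j hj => ?_⟩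
  have hle := mul_iSup_abs_berrut_sub_le (heven j).2 (half_pos hε).le (hN j hj (heven j).1)
  have hnonneg : 0 ≤ (n j : ℝ) * ⨆ x : {x : ℝ // x ∈ Ioo (-1 : ℝ) 1 ∧ ¬ isNode (n j) x},
      |berrut f (n j) x - f x - Efun f x / Dden (n j) x| :=
    mul_nonneg (Nat.cast_nonneg _) (Real.iSup_nonneg fun _ => abs_nonneg _)
  rw [Real.dist_eq, sub_zero, abs_of_nonneg hnonneg]
  linarith
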